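/- Let α > −1 and 1 < p < ∞. There exists a constant c_{p,α} > 0 such that for every f ∈ L^p(Π⁺, dV_α), ‖M_α f‖_{L^p(dV_α)} ≤ c_{p,α} ‖f‖_{L^p(dV_α)}. -/

import Mathlib

open MeasureTheory Set
open scoped ENNReal NNReal

noncomputable section

/-- The upper half-plane `Π⁺`. -/
def UHP : Set ℂ := {z : ℂ | 0 < z.im}

/-- The weighted measure `dV_α(x+iy) = y^α dx dy` on the upper half-plane. -/
def Vm (α : ℝ) : Measure ℂ :=
  (volume.restrict UHP).withDensity fun z => ENNReal.ofReal (z.im ^ α)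

/-- The Carleson square `Q_I = {x+iy : x ∈ I, 0 < y < |I|}` of the interval `I = (a,b)`. -/
def carlSq (a b : ℝ) : Set ℂ :=
  {z : ℂ | z.re ∈ Set.Ioo a b ∧ z.im ∈ Set.Ioo 0 (b - a)}

/-- The one-parameter maximal function
`M_α f(z) = sup_I χ_{Q_I}(z) (1/V_α(Q_I)) ∫_{Q_I} |f| dV_α`,
the supremum being over all intervals `I ⊂ ℝ`. -/
def maxFn (α : ℝ) (f : ℂ → ℂ) (z : ℂ) : ℝ≥0∞ :=
  ⨆ (a : ℝ) (b : ℝ) (_ : a < b) (_ : z ∈ carlSq a b),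
    (∫⁻ w in carlSq a b, (‖f w‖₊ : ℝ≥0∞) ∂(Vm α)) / Vm α (carlSq a b)

lemma isOpen_carlSq (a b : ℝ) : IsOpen (carlSq a b) := by
  have : carlSq a b = (Complex.re ⁻¹' Ioo a b) ∩ (Complex.im ⁻¹' Ioo 0 (b - a)) := rfl
  rw [this]
  exact (isOpen_Ioo.preimage Complex.continuous_re).inter
    (isOpen_Ioo.preimage Complex.continuous_im)

lemma measurableSet_carlSq (a b : ℝ) : MeasurableSet (carlSq a b) :=
  (isOpen_carlSq a b).measurableSet

lemma Vm_carlSq (α : ℝ) (hα : -1 < α) {a b : ℝ} (hab : a < b) :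
    Vm α (carlSq a b) = ENNReal.ofReal ((b - a) ^ (α + 2) / (α + 1)) := by
  have h : (0:ℝ) < b - a := by linarith
  have hQ := measurableSet_carlSq a b
  have hsub : carlSq a b ⊆ UHP := fun z hz => hz.2.1
  rw [Vm, withDensity_apply _ hQ, Measure.restrict_restrict hQ, Set.inter_eq_left.mpr hsub]
  have hpre : carlSq a b = Complex.measurableEquivRealProd ⁻¹' (Ioo a b ×ˢ Ioo 0 (b - a)) := by
    ext z
    simp [carlSq, Complex.measurableEquivRealProd, Complex.equivRealProd, Set.mem_prod]
  rw [hpre]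
  have := Complex.volume_preserving_equiv_real_prod.setLIntegral_comp_preimage_emb
    Complex.measurableEquivRealProd.measurableEmbedding
    (fun p : ℝ × ℝ => ENNReal.ofReal (p.2 ^ α)) (Ioo a b ×ˢ Ioo 0 (b - a))
  simp only [show ∀ z : ℂ, (Complex.measurableEquivRealProd z).2 = z.im from fun _ => rfl] at this
  rw [this]
  have hprod : (volume : Measure (ℝ × ℝ)).restrict (Ioo a b ×ˢ Ioo 0 (b - a)) =
      (volume.restrict (Ioo a b)).prod (volume.restrict (Ioo 0 (b - a))) := by
    rw [Measure.prod_restrict]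
    rfl
  have hinner : ∫⁻ y in Ioo 0 (b - a), ENNReal.ofReal (y ^ α) =
      ENNReal.ofReal ((b - a) ^ (α + 1) / (α + 1)) := by
    have hint : IntegrableOn (fun y : ℝ => y ^ α) (Ioo 0 (b - a)) volume := by
      have := (intervalIntegral.intervalIntegrable_rpow' (a := 0) (b := b - a) hα)
      rw [intervalIntegrable_iff_integrableOn_Ioo_of_le h.le] at this
      exact this
    rw [← ofReal_integral_eq_lintegral_ofReal hint]
    · congr 1
      rw [← integral_Ioc_eq_integral_Ioo, ← intervalIntegral.integral_of_le h.le,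
        integral_rpow (Or.inl hα)]
      rw [Real.zero_rpow (by linarith)]
      ring
    · filter_upwards [self_mem_ae_restrict (measurableSet_Ioo : MeasurableSet (Ioo (0:ℝ) (b-a)))]
      intro y hy
      exact Real.rpow_nonneg hy.1.le α
  calc ∫⁻ p in Ioo a b ×ˢ Ioo 0 (b - a), ENNReal.ofReal (p.2 ^ α) ∂(volume : Measure (ℝ × ℝ))
      = ∫⁻ x in Ioo a b, ∫⁻ y in Ioo 0 (b - a), ENNReal.ofReal (y ^ α) := by
        rw [hprod, lintegral_prod]
        exact (Measurable.ennreal_ofReal (by fun_prop)).aemeasurable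
    _ = ENNReal.ofReal ((b - a) ^ (α + 1) / (α + 1)) * ENNReal.ofReal (b - a) := by
        rw [hinner, setLIntegral_const, Real.volume_Ioo]
    _ = ENNReal.ofReal ((b - a) ^ (α + 2) / (α + 1)) := by
        rw [← ENNReal.ofReal_mul (div_nonneg (Real.rpow_nonneg h.le _) (by linarith))]
        congr 1
        rw [div_mul_eq_mul_div, ← Real.rpow_add_one (ne_of_gt h)]
        ring_nf

lemma le_maxFn {α : ℝ} {f : ℂ → ℂ} {z : ℂ} {a b : ℝ} (hab : a < b) (hz : z ∈ carlSq a b) :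
    (∫⁻ w in carlSq a b, (‖f w‖₊ : ℝ≥0∞) ∂(Vm α)) / Vm α (carlSq a b) ≤ maxFn α f z := by
  unfold maxFn
  refine le_trans ?_ (le_iSup _ a)
  refine le_trans ?_ (le_iSup _ b)
  refine le_trans ?_ (le_iSup _ hab)
  exact le_iSup (fun (_ : z ∈ carlSq a b) => _) hz

lemma maxFn_le {α : ℝ} {f : ℂ → ℂ} {z : ℂ} {c : ℝ≥0∞}
    (h : ∀ a b : ℝ, a < b → z ∈ carlSq a b →
      (∫⁻ w in carlSq a b, (‖f w‖₊ : ℝ≥0∞) ∂(Vm α)) / Vm α (carlSq a b) ≤ c) :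
    maxFn α f z ≤ c :=
  iSup_le fun a => iSup_le fun b => iSup_le fun hab => iSup_le fun hz => h a b hab hz

lemma measurable_maxFn (α : ℝ) (f : ℂ → ℂ) : Measurable (maxFn α f) := by
  have h : maxFn α f = fun z => ⨆ (a : ℝ) (b : ℝ) (_ : a < b),
      (carlSq a b).indicator
        (fun _ => (∫⁻ w in carlSq a b, (‖f w‖₊ : ℝ≥0∞) ∂(Vm α)) / Vm α (carlSq a b)) z := by
    funext z
    unfold maxFn
    congr 1; ext a; congr 1; ext b; congr 1; ext hab
    by_cases hz : z ∈ carlSq a b <;> simp [hz]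
  rw [h]
  refine LowerSemicontinuous.measurable ?_
  refine lowerSemicontinuous_iSup fun a => lowerSemicontinuous_iSup fun b =>
    lowerSemicontinuous_iSup fun hab => ?_
  exact (isOpen_carlSq a b).lowerSemicontinuous_indicator zero_le

lemma Vm_carlSq_ne_zero (α : ℝ) (hα : -1 < α) {a b : ℝ} (hab : a < b) :
    Vm α (carlSq a b) ≠ 0 := by
  rw [Vm_carlSq α hα hab]
  simp only [ne_eq, ENNReal.ofReal_eq_zero, not_le]
  exact div_pos (Real.rpow_pos_of_pos (by linarith) _) (by linarith)

lemma Vm_carlSq_ne_top (α : ℝ) (hα : -1 < α) {a b : ℝ} (hab : a < b) :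
    Vm α (carlSq a b) ≠ ∞ := by
  rw [Vm_carlSq α hα hab]; exact ENNReal.ofReal_ne_top

lemma maxFn_split (α : ℝ) (hα : -1 < α) {f : ℂ → ℂ} (hf : Measurable f) (s : ℝ≥0∞) (z : ℂ) :
    maxFn α f z ≤ maxFn α (fun w => if s < (‖f w‖₊ : ℝ≥0∞) then f w else 0) z + s := by
  apply maxFn_le
  intro a b hab hz
  set g := fun w => if s < (‖f w‖₊ : ℝ≥0∞) then f w else 0 with hg
  set h := fun w => if s < (‖f w‖₊ : ℝ≥0∞) then (0 : ℂ) else f w with hh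
  have hms : MeasurableSet {w : ℂ | s < (‖f w‖₊ : ℝ≥0∞)} :=
    measurableSet_lt measurable_const hf.nnnorm.coe_nnreal_ennreal
  have hgm : Measurable g := hf.ite hms measurable_const
  have hnorm : ∀ w, (‖f w‖₊ : ℝ≥0∞) = (‖g w‖₊ : ℝ≥0∞) + (‖h w‖₊ : ℝ≥0∞) := by
    intro w
    by_cases hw : s < (‖f w‖₊ : ℝ≥0∞) <;> simp [hg, hh, hw]
  have hV0 := Vm_carlSq_ne_zero α hα hab
  have hVt := Vm_carlSq_ne_top α hα hab
  have hsplit : (∫⁻ w in carlSq a b, (‖f w‖₊ : ℝ≥0∞) ∂(Vm α)) =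
      (∫⁻ w in carlSq a b, (‖g w‖₊ : ℝ≥0∞) ∂(Vm α)) +
      (∫⁻ w in carlSq a b, (‖h w‖₊ : ℝ≥0∞) ∂(Vm α)) := by
    rw [← lintegral_add_left hgm.nnnorm.coe_nnreal_ennreal]
    exact lintegral_congr fun w => hnorm w
  rw [hsplit, ENNReal.add_div]
  gcongr
  · exact le_maxFn hab hz
  · apply ENNReal.div_le_of_le_mul
    calc (∫⁻ w in carlSq a b, (‖h w‖₊ : ℝ≥0∞) ∂(Vm α))
        ≤ ∫⁻ _ in carlSq a b, s ∂(Vm α) := by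
          apply lintegral_mono
          intro w
          by_cases hw : s < (‖f w‖₊ : ℝ≥0∞)
          · simp [hh, hw]
          · simpa [hh, hw] using not_lt.mp hw
      _ = s * Vm α (carlSq a b) := setLIntegral_const _ _

lemma weak_type (α : ℝ) (hα : -1 < α) (f : ℂ → ℂ) (t : ℝ≥0∞) :
    t * Vm α {z | t < maxFn α f z} ≤
      ENNReal.ofReal (5 ^ (α + 2)) * ∫⁻ z, (‖f z‖₊ : ℝ≥0∞) ∂(Vm α) := by
  set I := ∫⁻ z, (‖f z‖₊ : ℝ≥0∞) ∂(Vm α) with hIdef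
  have h5 : (0:ℝ) < 5 ^ (α + 2) := Real.rpow_pos_of_pos (by norm_num) _
  by_cases hI : I = ∞
  · rw [hI, ENNReal.mul_top (by simp [not_le, h5])]; exact le_top
  rcases eq_or_ne t 0 with rfl | ht0
  · simp
  rcases eq_or_ne t ∞ with rfl | htop
  · have hempty : {z : ℂ | (∞ : ℝ≥0∞) < maxFn α f z} = ∅ := by
      ext z; simp [not_top_lt]
    simp [hempty]
  set A := α + 2 with hA
  have hA1 : (1:ℝ) < A := by rw [hA]; linarith
  have hAne : A ≠ 0 := by linarith
  -- the family of "bad" squares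
  set T : Set (ℝ × ℝ) := {q | q.1 < q.2 ∧
    t * Vm α (carlSq q.1 q.2) < ∫⁻ w in carlSq q.1 q.2, (‖f w‖₊ : ℝ≥0∞) ∂(Vm α)} with hT
  have hcov : ∀ z ∈ {z : ℂ | t < maxFn α f z}, ∃ q ∈ T, z ∈ carlSq q.1 q.2 := by
    intro z hz
    simp only [mem_setOf_eq, maxFn, lt_iSup_iff] at hz
    obtain ⟨a, b, hab, hzq, hlt⟩ := hz
    refine ⟨(a, b), ⟨hab, ?_⟩, hzq⟩
    exact (ENNReal.lt_div_iff_mul_lt (Or.inl (Vm_carlSq_ne_zero α hα hab))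
      (Or.inl (Vm_carlSq_ne_top α hα hab))).mp hlt
  set x : ℝ × ℝ → ℝ := fun q => (q.1 + q.2) / 2 with hx
  set r : ℝ × ℝ → ℝ := fun q => (q.2 - q.1) / 2 with hr
  set M : ℝ := (I / t).toReal with hM
  set R0 : ℝ := (M * (α + 1)) ^ A⁻¹ with hR0
  have hrbound : ∀ q ∈ T, r q ≤ R0 := by
    intro q hq
    have hq1 : q.1 < q.2 := hq.1
    have hL : (0:ℝ) < q.2 - q.1 := by linarith
    have hnum_le : (∫⁻ w in carlSq q.1 q.2, (‖f w‖₊ : ℝ≥0∞) ∂(Vm α)) ≤ I :=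
      lintegral_mono' Measure.restrict_le_self le_rfl
    have h1 : t * Vm α (carlSq q.1 q.2) ≤ I := le_trans hq.2.le hnum_le
    have h2 : Vm α (carlSq q.1 q.2) ≤ I / t := by
      rw [ENNReal.le_div_iff_mul_le (Or.inl ht0) (Or.inl htop), mul_comm]; exact h1
    rw [Vm_carlSq α hα hq1] at h2
    have hIt : I / t ≠ ∞ := (ENNReal.div_lt_top hI ht0).ne
    have h3 : (q.2 - q.1) ^ A / (α + 1) ≤ M :=
      (ENNReal.ofReal_le_iff_le_toReal hIt).mp h2
    have h4 : (q.2 - q.1) ^ A ≤ M * (α + 1) := by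
      rw [div_le_iff₀ (by linarith : (0:ℝ) < α + 1)] at h3; exact h3
    have h5' : ((q.2 - q.1) ^ A) ^ A⁻¹ ≤ R0 :=
      Real.rpow_le_rpow (Real.rpow_nonneg hL.le _) h4 (inv_nonneg.mpr (by linarith))
    rw [← Real.rpow_mul hL.le, mul_inv_cancel₀ hAne, Real.rpow_one] at h5'
    calc r q = (q.2 - q.1) / 2 := rfl
      _ ≤ q.2 - q.1 := by linarith
      _ ≤ R0 := h5'
  obtain ⟨u, huT, hdisj, hcover⟩ :=
    Vitali.exists_disjoint_subfamily_covering_enlargement_closedBall T x r R0 hrbound 4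
      (by norm_num)
  have hrpos : ∀ q ∈ u, 0 < r q := fun q hq => half_pos (sub_pos.mpr (huT hq).1)
  have hcnt : u.Countable := by
    apply Set.PairwiseDisjoint.countable_of_isOpen (s := fun q => Metric.ball (x q) (r q))
    · intro i hi j hj hij
      exact Disjoint.mono Metric.ball_subset_closedBall Metric.ball_subset_closedBall
        (hdisj hi hj hij)
    · intro q _; exact Metric.isOpen_ball
    · intro q hq; exact Metric.nonempty_ball.mpr (hrpos q hq)
  -- endpoints of intervals as centers/radii
  have hxr1 : ∀ q : ℝ × ℝ, x q - r q = q.1 := fun q => by rw [hx, hr]; ring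
  have hxr2 : ∀ q : ℝ × ℝ, x q + r q = q.2 := fun q => by rw [hx, hr]; ring
  -- the enlarged squares cover E
  have hEsub : {z : ℂ | t < maxFn α f z} ⊆
      ⋃ q ∈ u, carlSq (x q - 5 * r q) (x q + 5 * r q) := by
    intro z hz
    obtain ⟨q0, hq0T, hz0⟩ := hcov z hz
    obtain ⟨q, hqu, hsub⟩ := hcover q0 hq0T
    have hrq : 0 < r q := hrpos q hqu
    have hrq0 : 0 < r q0 := half_pos (sub_pos.mpr hq0T.1)
    have he1 : q0.1 ∈ Metric.closedBall (x q) (4 * r q) := by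
      apply hsub
      rw [Metric.mem_closedBall, Real.dist_eq, ← hxr1 q0]
      rw [abs_le]; constructor <;> [linarith; linarith]
    have he2 : q0.2 ∈ Metric.closedBall (x q) (4 * r q) := by
      apply hsub
      rw [Metric.mem_closedBall, Real.dist_eq, ← hxr2 q0]
      rw [abs_le]; constructor <;> [linarith; linarith]
    rw [Metric.mem_closedBall, Real.dist_eq, abs_le] at he1 he2
    have hz1 : z.re ∈ Ioo q0.1 q0.2 := hz0.1
    have hz2 : z.im ∈ Ioo 0 (q0.2 - q0.1) := hz0.2
    simp only [mem_Ioo] at hz1 hz2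
    refine mem_biUnion hqu ?_
    refine ⟨?_, ?_⟩ <;> simp only [mem_Ioo]
    · constructor <;> [linarith [he1.1]; linarith [he2.2]]
    · constructor <;> [exact hz2.1; linarith [he1.1, he2.2, hz2.2]]
  -- disjointness of the selected squares
  have hdisjQ : u.PairwiseDisjoint fun q : ℝ × ℝ => carlSq q.1 q.2 := by
    intro i hi j hj hij
    refine Set.disjoint_left.mpr fun z hzi hzj => ?_
    have hmem : ∀ q : ℝ × ℝ, z ∈ carlSq q.1 q.2 → z.re ∈ Metric.closedBall (x q) (r q) := by
      intro q hq
      rw [Real.closedBall_eq_Icc, hxr1, hxr2]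
      exact Ioo_subset_Icc_self hq.1
    exact Set.disjoint_left.mp (hdisj hi hj hij) (hmem i hzi) (hmem j hzj)
  set ν : Measure ℂ := (Vm α).withDensity fun z => (‖f z‖₊ : ℝ≥0∞) with hν
  have hJ : ∀ q ∈ u, Vm α (carlSq (x q - 5 * r q) (x q + 5 * r q)) =
      ENNReal.ofReal (5 ^ A) * Vm α (carlSq q.1 q.2) := by
    intro q hq
    have hrq : 0 < r q := hrpos q hq
    have h1 : x q - 5 * r q < x q + 5 * r q := by linarith
    rw [Vm_carlSq α hα h1, Vm_carlSq α hα (huT hq).1,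
      ← ENNReal.ofReal_mul (Real.rpow_nonneg (by norm_num : (0:ℝ) ≤ 5) _)]
    congr 1
    have : x q + 5 * r q - (x q - 5 * r q) = 5 * (q.2 - q.1) := by rw [hr]; ring
    rw [this, Real.mul_rpow (by norm_num) (by linarith [(huT hq).1])]
    ring
  calc t * Vm α {z | t < maxFn α f z}
      ≤ t * Vm α (⋃ q ∈ u, carlSq (x q - 5 * r q) (x q + 5 * r q)) := by
        exact mul_le_mul_right (measure_mono hEsub) t
    _ ≤ t * ∑' q : u, Vm α (carlSq (x q.1 - 5 * r q.1) (x q.1 + 5 * r q.1)) := by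
        exact mul_le_mul_right (measure_biUnion_le _ hcnt _) t
    _ = t * ∑' q : u, ENNReal.ofReal (5 ^ A) * Vm α (carlSq q.1.1 q.1.2) := by
        congr 1; exact tsum_congr fun q => hJ q.1 q.2
    _ = ENNReal.ofReal (5 ^ A) * ∑' q : u, t * Vm α (carlSq q.1.1 q.1.2) := by
        rw [ENNReal.tsum_mul_left, ENNReal.tsum_mul_left, ← mul_assoc, ← mul_assoc,
          mul_comm t (ENNReal.ofReal (5 ^ A))]
    _ ≤ ENNReal.ofReal (5 ^ A) * ∑' q : u, ν (carlSq q.1.1 q.1.2) := by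
        gcongr with q
        rw [hν, withDensity_apply _ (measurableSet_carlSq _ _)]
        exact (huT q.2).2.le
    _ = ENNReal.ofReal (5 ^ A) * ν (⋃ q ∈ u, carlSq q.1 q.2) := by
        rw [measure_biUnion hcnt hdisjQ fun q _ => measurableSet_carlSq _ _]
    _ ≤ ENNReal.ofReal (5 ^ A) * ν univ := by gcongr; exact subset_univ _
    _ = ENNReal.ofReal (5 ^ A) * I := by
        rw [hν, withDensity_apply _ MeasurableSet.univ, Measure.restrict_univ]

lemma distribution_bound (α : ℝ) (hα : -1 < α) {f : ℂ → ℂ} (hf : Measurable f) {t : ℝ}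
    (ht : 0 < t) :
    Vm α {z | ENNReal.ofReal t < maxFn α f z} ≤
      ENNReal.ofReal (5 ^ (α + 2)) *
        (∫⁻ w, (if ENNReal.ofReal (t/2) < (‖f w‖₊ : ℝ≥0∞) then (‖f w‖₊ : ℝ≥0∞) else 0) ∂(Vm α))
        / ENNReal.ofReal (t / 2) := by
  set s := ENNReal.ofReal (t / 2) with hs
  have hs0 : s ≠ 0 := by simp only [hs, ne_eq, ENNReal.ofReal_eq_zero, not_le]; linarith
  have hstop : s ≠ ∞ := ENNReal.ofReal_ne_top
  set g := fun w => if s < (‖f w‖₊ : ℝ≥0∞) then f w else 0 with hg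
  have hsub : {z : ℂ | ENNReal.ofReal t < maxFn α f z} ⊆ {z | s < maxFn α g z} := by
    intro z hz
    simp only [mem_setOf_eq] at hz ⊢
    by_contra hle
    push_neg at hle
    have h1 := maxFn_split α hα hf s z
    have h2 : maxFn α f z ≤ s + s := le_trans h1 (add_le_add_left hle s)
    rw [hs, ← ENNReal.ofReal_add (by linarith) (by linarith)] at h2
    have h3 : t/2 + t/2 = t := by ring
    rw [h3] at h2
    exact absurd hz (not_lt.mpr h2)
  have hgnorm : ∀ w, (‖g w‖₊ : ℝ≥0∞) =
      (if s < (‖f w‖₊ : ℝ≥0∞) then (‖f w‖₊ : ℝ≥0∞) else 0) := by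
    intro w; by_cases hw : s < (‖f w‖₊ : ℝ≥0∞) <;> simp [hg, hw]
  have hwk := weak_type α hα g s
  simp only [hgnorm] at hwk
  rw [ENNReal.le_div_iff_mul_le (Or.inl hs0) (Or.inl hstop)]
  calc Vm α {z | ENNReal.ofReal t < maxFn α f z} * s
      ≤ Vm α {z | s < maxFn α g z} * s := by
        exact mul_le_mul_left (measure_mono hsub) s
    _ = s * Vm α {z | s < maxFn α g z} := mul_comm _ _
    _ ≤ _ := hwk

lemma inner_integral {p : ℝ} (hp : 1 < p) {B : ℝ} (hB : 0 ≤ B) :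
    (∫⁻ t in Ioi (0:ℝ), ENNReal.ofReal (2 * t ^ (p-2)) *
      (if ENNReal.ofReal (t/2) < ENNReal.ofReal B then ENNReal.ofReal B else 0)) =
    ENNReal.ofReal (2 ^ p / (p-1)) * ENNReal.ofReal B ^ p := by
  rcases hB.eq_or_lt with rfl | hB'
  · simp only [ENNReal.ofReal_zero]
    rw [ENNReal.zero_rpow_of_pos (by linarith), mul_zero]
    have : ∀ t : ℝ, ENNReal.ofReal (2 * t ^ (p-2)) *
        (if ENNReal.ofReal (t/2) < (0:ℝ≥0∞) then (0:ℝ≥0∞) else 0) = 0 := by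
      intro t; split <;> simp
    simp only [this, lintegral_const, zero_mul, mul_zero]
  · have hcongr : ∀ t ∈ Ioi (0:ℝ), ENNReal.ofReal (2 * t ^ (p-2)) *
        (if ENNReal.ofReal (t/2) < ENNReal.ofReal B then ENNReal.ofReal B else 0) =
        (Ioo (0:ℝ) (2*B)).indicator
          (fun t => ENNReal.ofReal (2 * t ^ (p-2)) * ENNReal.ofReal B) t := by
      intro t ht
      rw [mem_Ioi] at ht
      simp only [ENNReal.ofReal_lt_ofReal_iff hB']
      by_cases h : t < 2 * B
      · rw [if_pos (by linarith), Set.indicator_of_mem (by exact ⟨ht, h⟩)]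
      · rw [if_neg (by intro hc; exact h (by linarith)),
          Set.indicator_of_notMem (by simp [mem_Ioo]; intro _; linarith), mul_zero]
    rw [setLIntegral_congr_fun measurableSet_Ioi hcongr,
      lintegral_indicator measurableSet_Ioo _, Measure.restrict_restrict measurableSet_Ioo,
      Set.inter_eq_left.mpr Ioo_subset_Ioi_self]
    have hM : (0:ℝ) < 2 * B := by linarith
    have hint : IntegrableOn (fun t : ℝ => 2 * t ^ (p-2)) (Ioo 0 (2*B)) volume := by
      have := (intervalIntegral.intervalIntegrable_rpow' (a := 0) (b := 2*B)
        (by linarith : (-1:ℝ) < p - 2)).const_mul 2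
      rw [intervalIntegrable_iff_integrableOn_Ioo_of_le hM.le] at this
      exact this
    have hinner : ∫⁻ t in Ioo (0:ℝ) (2*B), ENNReal.ofReal (2 * t ^ (p-2)) =
        ENNReal.ofReal (2 * (2*B) ^ (p-1) / (p-1)) := by
      rw [← ofReal_integral_eq_lintegral_ofReal hint]
      · congr 1
        rw [← integral_Ioc_eq_integral_Ioo, ← intervalIntegral.integral_of_le hM.le,
          intervalIntegral.integral_const_mul, integral_rpow (Or.inl (by linarith))]
        rw [Real.zero_rpow (by linarith : p - 2 + 1 ≠ 0)]
        have : p - 2 + 1 = p - 1 := by ring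
        rw [this]
        ring
      · filter_upwards [self_mem_ae_restrict (measurableSet_Ioo :
          MeasurableSet (Ioo (0:ℝ) (2*B)))]
        intro y hy
        have := Real.rpow_nonneg hy.1.le (p-2)
        positivity
    rw [lintegral_mul_const'' _ (by fun_prop : AEMeasurable (fun t : ℝ => ENNReal.ofReal (2 * t ^ (p-2))) _), hinner,
      ENNReal.ofReal_rpow_of_pos hB']
    have hX : (0:ℝ) ≤ 2 * (2*B) ^ (p-1) / (p-1) :=
      div_nonneg (mul_nonneg (by norm_num) (Real.rpow_nonneg hM.le _)) (by linarith)
    have hY : (0:ℝ) ≤ 2 ^ p / (p-1) :=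
      div_nonneg (Real.rpow_nonneg (by norm_num) _) (by linarith)
    rw [← ENNReal.ofReal_mul hX, ← ENNReal.ofReal_mul hY]
    congr 1
    have h2 : (2:ℝ) * (2 ^ (p-1)) = 2 ^ p := by
      nth_rewrite 1 [show (2:ℝ) = 2 ^ (1:ℝ) from (Real.rpow_one 2).symm]
      rw [← Real.rpow_add (by norm_num : (0:ℝ) < 2)]
      ring_nf
    have h3 : B ^ p = B ^ (p-1) * B := by
      rw [← Real.rpow_add_one hB'.ne' (p-1)]
      ring_nf
    rw [Real.mul_rpow (by norm_num : (0:ℝ) ≤ 2) hB, h3, ← h2]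
    field_simp

lemma sigmaFinite_Vm (α : ℝ) : SigmaFinite (Vm α) :=
  SigmaFinite.withDensity_of_ne_top' fun _ => ENNReal.ofReal_ne_top

lemma lintegral_maxFn_le (α : ℝ) (hα : -1 < α) (p : ℝ) (hp : 1 < p) {f : ℂ → ℂ}
    (hf : Measurable f) :
    ∫⁻ z, (maxFn α f z) ^ p ∂(Vm α) ≤
      ENNReal.ofReal (p * 5 ^ (α + 2) * (2 ^ p / (p - 1))) *
        ∫⁻ z, (‖f z‖₊ : ℝ≥0∞) ^ p ∂(Vm α) := by
  set μ := Vm α with hμ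
  set K := ENNReal.ofReal (5 ^ (α + 2)) with hK
  set F := maxFn α f with hF
  have hFm : Measurable F := measurable_maxFn α f
  set Ip := ∫⁻ z, (‖f z‖₊ : ℝ≥0∞) ^ p ∂μ with hIp
  set G : ℝ → ℂ → ℝ≥0∞ := fun t w =>
    if ENNReal.ofReal (t/2) < (‖f w‖₊ : ℝ≥0∞) then (‖f w‖₊ : ℝ≥0∞) else 0 with hG
  haveI : SigmaFinite μ := sigmaFinite_Vm α
  have hGum : Measurable (Function.uncurry G) :=
    Measurable.ite (measurableSet_lt (by fun_prop) (hf.nnnorm.coe_nnreal_ennreal.comp measurable_snd))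
      (hf.nnnorm.coe_nnreal_ennreal.comp measurable_snd) measurable_const
  -- Fubini + inner integral computation
  have hswap : (∫⁻ t in Ioi (0:ℝ), ENNReal.ofReal (2 * t ^ (p-2)) * ∫⁻ w, G t w ∂μ) =
      ENNReal.ofReal (2 ^ p / (p - 1)) * Ip := by
    have hGm : Measurable fun q : ℝ × ℂ => ENNReal.ofReal (2 * q.1 ^ (p-2)) * G q.1 q.2 :=
      Measurable.mul (by fun_prop) hGum
    calc (∫⁻ t in Ioi (0:ℝ), ENNReal.ofReal (2 * t ^ (p-2)) * ∫⁻ w, G t w ∂μ)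
        = ∫⁻ t in Ioi (0:ℝ), ∫⁻ w, ENNReal.ofReal (2 * t ^ (p-2)) * G t w ∂μ := by
          apply lintegral_congr
          intro t
          rw [lintegral_const_mul' _ _ ENNReal.ofReal_ne_top]
      _ = ∫⁻ w, (∫⁻ t in Ioi (0:ℝ), ENNReal.ofReal (2 * t ^ (p-2)) * G t w) ∂μ :=
          lintegral_lintegral_swap hGm.aemeasurable
      _ = ∫⁻ w, ENNReal.ofReal (2 ^ p / (p - 1)) * (‖f w‖₊ : ℝ≥0∞) ^ p ∂μ := by
          apply lintegral_congr
          intro w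
          have hBeq : ((‖f w‖₊ : ℝ≥0∞)) = ENNReal.ofReal ‖f w‖ := (ENNReal.ofReal_eq_coe_nnreal (norm_nonneg (f w))).symm
          rw [hG]
          simp only [hBeq]
          exact inner_integral hp (norm_nonneg (f w))
      _ = ENNReal.ofReal (2 ^ p / (p - 1)) * Ip := by
          rw [hIp, lintegral_const_mul' _ _ ENNReal.ofReal_ne_top]
  -- uniform bound for truncations
  have key : ∀ n : ℕ, ∫⁻ z, (min (F z) n) ^ p ∂μ ≤
      ENNReal.ofReal p * (K * (ENNReal.ofReal (2 ^ p / (p - 1)) * Ip)) := by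
    intro n
    set Fn := fun z => min (F z) (n : ℝ≥0∞) with hFn
    set fn := fun z => (Fn z).toReal with hfn
    have hFn_ne : ∀ z, Fn z ≠ ∞ := fun z =>
      (lt_of_le_of_lt (min_le_right _ _) (ENNReal.natCast_lt_top n)).ne
    have hfnm : AEMeasurable fn μ := ((hFm.min measurable_const).ennreal_toReal).aemeasurable
    have h0 : ∫⁻ z, (Fn z) ^ p ∂μ = ∫⁻ z, ENNReal.ofReal (fn z ^ p) ∂μ := by
      apply lintegral_congr
      intro z
      rw [← ENNReal.ofReal_rpow_of_nonneg ENNReal.toReal_nonneg (by linarith : (0:ℝ) ≤ p),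
        ENNReal.ofReal_toReal (hFn_ne z)]
    rw [h0, lintegral_rpow_eq_lintegral_meas_lt_mul μ
      (ae_of_all _ fun z => ENNReal.toReal_nonneg) hfnm (by linarith : 0 < p)]
    have hptws : ∀ t ∈ Ioi (0:ℝ), μ {a | t < fn a} * ENNReal.ofReal (t ^ (p-1)) ≤
        K * (ENNReal.ofReal (2 * t ^ (p-2)) * ∫⁻ w, G t w ∂μ) := by
      intro t ht
      rw [mem_Ioi] at ht
      have hmono : μ {a | t < fn a} ≤ μ {z | ENNReal.ofReal t < F z} := by
        apply measure_mono
        intro a ha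
        simp only [mem_setOf_eq] at ha ⊢
        exact lt_of_lt_of_le
          ((ENNReal.ofReal_lt_iff_lt_toReal ht.le (hFn_ne a)).mpr ha) (min_le_left _ _)
      have hdist := distribution_bound α hα hf ht
      have hfrac : ENNReal.ofReal (t ^ (p-1)) / ENNReal.ofReal (t/2) =
          ENNReal.ofReal (2 * t ^ (p-2)) := by
        rw [← ENNReal.ofReal_div_of_pos (by linarith : (0:ℝ) < t/2)]
        congr 1
        have : t ^ (p-1) = t ^ (p-2) * t := by
          rw [← Real.rpow_add_one (ne_of_gt ht) (p-2)]; ring_nf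
        rw [this]
        field_simp
      calc μ {a | t < fn a} * ENNReal.ofReal (t ^ (p-1))
          ≤ (K * (∫⁻ w, G t w ∂μ) / ENNReal.ofReal (t/2)) * ENNReal.ofReal (t ^ (p-1)) := by
            exact mul_le_mul_left (le_trans hmono (hdist)) _
        _ = K * ((ENNReal.ofReal (t ^ (p-1)) / ENNReal.ofReal (t/2)) * ∫⁻ w, G t w ∂μ) := by
            simp only [div_eq_mul_inv]; ring
        _ = K * (ENNReal.ofReal (2 * t ^ (p-2)) * ∫⁻ w, G t w ∂μ) := by rw [hfrac]
    calc ENNReal.ofReal p * ∫⁻ t in Ioi (0:ℝ), μ {a | t < fn a} * ENNReal.ofReal (t ^ (p-1))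
        ≤ ENNReal.ofReal p * ∫⁻ t in Ioi (0:ℝ),
            K * (ENNReal.ofReal (2 * t ^ (p-2)) * ∫⁻ w, G t w ∂μ) := by
          apply mul_le_mul_right
          refine setLIntegral_mono_ae ?_ (ae_of_all _ hptws)
          refine (Measurable.const_mul (Measurable.mul (by fun_prop)
            (Measurable.lintegral_prod_right (f := G) hGum)) K).aemeasurable
      _ = ENNReal.ofReal p * (K * (ENNReal.ofReal (2 ^ p / (p - 1)) * Ip)) := by
          rw [lintegral_const_mul' K _ ENNReal.ofReal_ne_top, hswap]
  -- pass to the supremum of the truncations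
  have hsup : ∀ z, (⨆ n : ℕ, (min (F z) (n : ℝ≥0∞)) ^ p) = F z ^ p := by
    intro z
    apply le_antisymm
    · exact iSup_le fun n => ENNReal.rpow_le_rpow (min_le_left _ _) (by linarith)
    · rcases eq_or_ne (F z) ∞ with hz | hz
      · rw [hz, ENNReal.top_rpow_of_pos (by linarith : (0:ℝ) < p)]
        have h1 : ∀ m : ℕ, (m : ℝ≥0∞) ≤ ⨆ n : ℕ, (min (⊤ : ℝ≥0∞) (n : ℝ≥0∞)) ^ p := by
          intro m
          rcases Nat.eq_zero_or_pos m with rfl | hm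
          · simp
          refine le_trans ?_ (le_iSup _ m)
          rw [min_eq_right (le_top : (m:ℝ≥0∞) ≤ ⊤)]
          calc (m : ℝ≥0∞) = (m : ℝ≥0∞) ^ (1:ℝ) := (ENNReal.rpow_one _).symm
            _ ≤ (m : ℝ≥0∞) ^ p := ENNReal.rpow_le_rpow_of_exponent_le
                (by exact_mod_cast Nat.one_le_cast.mpr hm) (by linarith)
        calc (⊤:ℝ≥0∞) = ⨆ m : ℕ, (m : ℝ≥0∞) := ENNReal.iSup_natCast.symm
          _ ≤ ⨆ n : ℕ, (min (⊤:ℝ≥0∞) (n : ℝ≥0∞)) ^ p := iSup_le h1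
      · obtain ⟨n, hn⟩ := ENNReal.exists_nat_gt hz
        refine le_trans ?_ (le_iSup _ n)
        rw [min_eq_left hn.le]
  have hmeas : ∀ n : ℕ, Measurable fun z => (min (F z) (n : ℝ≥0∞)) ^ p := by
    intro n; fun_prop
  have hmono : Monotone fun (n : ℕ) (z : ℂ) => (min (F z) (n : ℝ≥0∞)) ^ p := by
    intro a b hab z
    exact ENNReal.rpow_le_rpow (min_le_min le_rfl (by exact_mod_cast Nat.cast_le.mpr hab))
      (by linarith)
  calc ∫⁻ z, F z ^ p ∂μ = ∫⁻ z, ⨆ n : ℕ, (min (F z) (n : ℝ≥0∞)) ^ p ∂μ :=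
        lintegral_congr fun z => (hsup z).symm
    _ = ⨆ n : ℕ, ∫⁻ z, (min (F z) (n : ℝ≥0∞)) ^ p ∂μ := lintegral_iSup hmeas hmono
    _ ≤ ENNReal.ofReal p * (K * (ENNReal.ofReal (2 ^ p / (p - 1)) * Ip)) := iSup_le key
    _ = ENNReal.ofReal (p * 5 ^ (α + 2) * (2 ^ p / (p - 1))) * Ip := by
        rw [ENNReal.ofReal_mul (mul_nonneg (by linarith) (Real.rpow_nonneg (by norm_num) _)),
          ENNReal.ofReal_mul (by linarith : (0:ℝ) ≤ p)]
        rw [hK]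
        ring


/-- the maximal function `M_α` is bounded on `L^p(Π⁺, dV_α)` for
`1 < p < ∞`: `‖M_α f‖_p ≤ c_{p,α} ‖f‖_p`. -/
theorem maximal_Lp_bounded (α : ℝ) (hα : -1 < α) (p : ℝ) (hp : 1 < p) :
    ∃ c : ℝ, 0 < c ∧ ∀ f : ℂ → ℂ,
      MemLp f (ENNReal.ofReal p) (Vm α) →
      (∫⁻ z, (maxFn α f z) ^ p ∂(Vm α)) ≤
        ENNReal.ofReal c ^ p * (∫⁻ z, (‖f z‖₊ : ℝ≥0∞) ^ p ∂(Vm α)) := by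
  set K0 : ℝ := p * 5 ^ (α + 2) * (2 ^ p / (p - 1)) with hK0
  have h5 : (0:ℝ) < 5 ^ (α + 2) := Real.rpow_pos_of_pos (by norm_num) _
  have h2 : (0:ℝ) < 2 ^ p := Real.rpow_pos_of_pos (by norm_num) _
  have hp1 : (0:ℝ) < p - 1 := by linarith
  have hK0pos : 0 < K0 := by positivity
  refine ⟨K0 ^ (1/p) + 1, by positivity, ?_⟩
  intro f hmem
  set g := hmem.1.mk f with hg
  have hgm : StronglyMeasurable g := hmem.1.stronglyMeasurable_mk
  have hfg : f =ᵐ[Vm α] g := hmem.1.ae_eq_mk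
  have hmax : maxFn α f = maxFn α g := by
    funext z
    unfold maxFn
    congr 1; ext a; congr 1; ext b; congr 1; ext hab; congr 1; ext hz
    congr 1
    exact lintegral_congr_ae (ae_restrict_of_ae (hfg.mono fun w hw => by simp only [hw]))
  have hInt : ∫⁻ z, (‖f z‖₊ : ℝ≥0∞) ^ p ∂(Vm α) = ∫⁻ z, (‖g z‖₊ : ℝ≥0∞) ^ p ∂(Vm α) :=
    lintegral_congr_ae (hfg.mono fun w hw => by simp only [hw])
  rw [hmax, hInt]
  refine le_trans (lintegral_maxFn_le α hα p hp hgm.measurable) (mul_le_mul_left ?_ _)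
  rw [ENNReal.ofReal_rpow_of_pos (by positivity)]
  apply ENNReal.ofReal_le_ofReal
  calc K0 = (K0 ^ (1/p)) ^ p := by
        rw [← Real.rpow_mul hK0pos.le, one_div, inv_mul_cancel₀ (by linarith), Real.rpow_one]
    _ ≤ (K0 ^ (1/p) + 1) ^ p :=
        Real.rpow_le_rpow (by positivity) (by linarith) (by linarith)
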